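/- If S ⊆ Events(σ) is sync-preserving closed, then the sequence ρ obtained by listing the events of S in trace order of σ is a well-formed trace (obeys lock semantics), is a correct reordering of σ, and is sync-preserving with respect to σ. -/

import Mathlib

/- A model of concurrent program traces: events are read/write/acquire/release
operations performed by threads; a trace is a finite sequence of events,
identified by their indices. -/

inductive Op where
  | read  (x : ℕ)
  | write (x : ℕ)
  | acq (l : ℕ)
  | rel (l : ℕ)
deriving DecidableEq

structure Event where
  thread : ℕ
  op : Op
deriving DecidableEq

def evAt (σ : List Event) (i : ℕ) : Event := σ.getD i ⟨0, Op.read 0⟩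

def threadOf (σ : List Event) (i : ℕ) : ℕ := (evAt σ i).thread

def isAcq (σ : List Event) (l i : ℕ) : Prop := i < σ.length ∧ (evAt σ i).op = Op.acq l
def isRel (σ : List Event) (l i : ℕ) : Prop := i < σ.length ∧ (evAt σ i).op = Op.rel l
def isRead (σ : List Event) (x i : ℕ) : Prop := i < σ.length ∧ (evAt σ i).op = Op.read x
def isWrite (σ : List Event) (x i : ℕ) : Prop := i < σ.length ∧ (evAt σ i).op = Op.write x

/-- `e` is an event on lock `l` (an acquire or release of `l`). -/
def onLock (l : ℕ) (e : Event) : Bool := decide (e.op = Op.acq l ∨ e.op = Op.rel l)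

/-- Thread order: `i` and `j` are events of the same thread with `i` not after `j`. -/
def TO (σ : List Event) (i j : ℕ) : Prop :=
  i ≤ j ∧ j < σ.length ∧ threadOf σ i = threadOf σ j

/-- Alternating sequence of matched acquire/release pairs on lock `l`, each pair
performed by a single thread, with at most one unmatched acquire at the end. -/
inductive LockAlt (l : ℕ) : List Event → Prop
  | nil : LockAlt l []
  | pending (t : ℕ) : LockAlt l [⟨t, Op.acq l⟩]
  | pair (t : ℕ) {rest : List Event} : LockAlt l rest →
      LockAlt l (⟨t, Op.acq l⟩ :: ⟨t, Op.rel l⟩ :: rest)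

/-- Well-formedness of an event sequence: for each lock, the projection alternates
matched acquire/release pairs, with at most one pending acquire. -/
def WellFormedEvents (es : List Event) : Prop := ∀ l, LockAlt l (es.filter (onLock l))

/-- Words of the language `(Σ_t ⟨t, acq(l)⟩ · ⟨t, rel(l)⟩)*`. -/
inductive PairsLang (l : ℕ) : List Event → Prop
  | nil : PairsLang l []
  | pair (t : ℕ) {rest : List Event} : PairsLang l rest →
      PairsLang l (⟨t, Op.acq l⟩ :: ⟨t, Op.rel l⟩ :: rest)

/-- Lock semantics: for every lock `l`, the projection of the trace onto events on `l`
is a prefix of a word in the language `(Σ_t ⟨t, acq(l)⟩ · ⟨t, rel(l)⟩)*`. -/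
def LockSem (σ : List Event) : Prop :=
  ∀ l, ∃ w, PairsLang l w ∧ (σ.filter (onLock l)) <+: w

/-- Thread `t` holds lock `l` after the prefix of length `n`: the last event of the
prefix on lock `l` is an acquire of `l` by `t`. -/
def Holds (σ : List Event) (n t l : ℕ) : Prop :=
  ∃ i, i < n ∧ isAcq σ l i ∧ threadOf σ i = t ∧
    ∀ j, i < j → j < n → j < σ.length → onLock l (evAt σ j) = false

/-- `r` is the matching release of the acquire `a`: same thread, same lock, with no
intervening event on that lock in between. -/
def MatchRel (σ : List Event) (a r : ℕ) : Prop :=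
  ∃ l, isAcq σ l a ∧ isRel σ l r ∧ a < r ∧ threadOf σ a = threadOf σ r ∧
    ∀ k, a < k → k < r → ¬ (isAcq σ l k ∨ isRel σ l k)

/-- `i` is the last write (on the common variable) before the read `j` in `σ`. -/
def LastWrite (σ : List Event) (i j : ℕ) : Prop :=
  ∃ x, isWrite σ x i ∧ isRead σ x j ∧ i < j ∧ ∀ k, i < k → k < j → ¬ isWrite σ x k

/-- `i` is the immediate thread-order predecessor of `j` in `σ`. -/
def Prev (σ : List Event) (j i : ℕ) : Prop :=
  i < j ∧ j < σ.length ∧ threadOf σ i = threadOf σ j ∧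
    ∀ k, i < k → k < j → threadOf σ k ≠ threadOf σ j

/-- `S` is downward-closed with respect to thread order. -/
def TODownClosed (σ : List Event) (S : Set ℕ) : Prop :=
  ∀ i j, TO σ i j → j ∈ S → i ∈ S

/-- `S` is `(TO, lw)`-closed. -/
def TOLWClosed (σ : List Event) (S : Set ℕ) : Prop :=
  TODownClosed σ S ∧ ∀ i j, LastWrite σ i j → j ∈ S → i ∈ S

/-- `S` is sync-preserving closed. -/
def SPClosed (σ : List Event) (S : Set ℕ) : Prop :=
  TOLWClosed σ S ∧
    ∀ l a1 a2 r1, isAcq σ l a1 → isAcq σ l a2 → a1 < a2 →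
      a1 ∈ S → a2 ∈ S → MatchRel σ a1 r1 → r1 ∈ S

/-- The sync-preserving closure of `S`. -/
def SPClosure (σ : List Event) (S : Set ℕ) : Set ℕ :=
  ⋂₀ {S' : Set ℕ | S ⊆ S' ∧ SPClosed σ S'}

def PrevSet (σ : List Event) (j : ℕ) : Set ℕ := {i | Prev σ j i}

def SPIdeal (σ : List Event) (e1 e2 : ℕ) : Set ℕ :=
  SPClosure σ (PrevSet σ e1 ∪ PrevSet σ e2)

/-- `i` occurs before `j` in the reordering `ρ` (a list of σ-indices). -/
def RBefore (ρ : List ℕ) (i j : ℕ) : Prop :=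
  i ∈ ρ ∧ j ∈ ρ ∧ ρ.idxOf i < ρ.idxOf j

/-- `i` is the last write before the read `j` in the reordering `ρ`. -/
def LastWriteIn (σ : List Event) (ρ : List ℕ) (i j : ℕ) : Prop :=
  ∃ x, isWrite σ x i ∧ isRead σ x j ∧ RBefore ρ i j ∧
    ∀ k, isWrite σ x k → ¬ (RBefore ρ i k ∧ RBefore ρ k j)

/-- `ρ` (a duplicate-free list of σ-indices, read as a trace) is a correct reordering
of `σ`: a well-formed trace over a subset of events of `σ` that is downward-closed
under thread order, respects thread order, and in which every read observes the
same last write as in `σ`. -/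
def CorrectReordering (σ : List Event) (ρ : List ℕ) : Prop :=
  ρ.Nodup ∧ (∀ i ∈ ρ, i < σ.length) ∧
  WellFormedEvents (ρ.map (evAt σ)) ∧
  (∀ i j, TO σ i j → j ∈ ρ → i ∈ ρ) ∧
  (∀ i j, i ∈ ρ → j ∈ ρ → i ≠ j → TO σ i j → RBefore ρ i j) ∧
  (∀ j x, isRead σ x j → j ∈ ρ → ∀ i, LastWriteIn σ ρ i j ↔ LastWrite σ i j)

/-- Event `e` of `σ` is σ-enabled in the reordering `ρ`. -/
def EnabledIn (σ : List Event) (ρ : List ℕ) (e : ℕ) : Prop :=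
  e < σ.length ∧ e ∉ ρ ∧ ∀ i, i ≠ e → TO σ i e → i ∈ ρ

/-- `ρ` is sync-preserving w.r.t. `σ`: any two same-lock acquires occurring in `ρ`
appear in the same relative order as in `σ`. -/
def SyncPreserving (σ : List Event) (ρ : List ℕ) : Prop :=
  ∀ l a1 a2, isAcq σ l a1 → isAcq σ l a2 → a1 ∈ ρ → a2 ∈ ρ →
    (RBefore ρ a1 a2 ↔ a1 < a2)

/-- Conflicting events: different threads, common variable, at least one write. -/
def Conflict (σ : List Event) (i j : ℕ) : Prop :=
  i < σ.length ∧ j < σ.length ∧ threadOf σ i ≠ threadOf σ j ∧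
    ∃ x, (isWrite σ x i ∧ (isWrite σ x j ∨ isRead σ x j)) ∨
         (isRead σ x i ∧ isWrite σ x j)

/-- `(e1, e2)` is a sync-preserving race of `σ`. -/
def SPRace (σ : List Event) (e1 e2 : ℕ) : Prop :=
  Conflict σ e1 e2 ∧ ∃ ρ : List ℕ, CorrectReordering σ ρ ∧ SyncPreserving σ ρ ∧
    EnabledIn σ ρ e1 ∧ EnabledIn σ ρ e2

/-- Happens-before: smallest transitive relation containing thread order and
ordering each release of a lock before every later acquire of that lock. -/
inductive HB (σ : List Event) : ℕ → ℕ → Prop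
  | to {i j : ℕ} : TO σ i j → HB σ i j
  | relacq {l i j : ℕ} : isRel σ l i → isAcq σ l j → i < j → HB σ i j
  | trans {i j k : ℕ} : HB σ i j → HB σ j k → HB σ i k

/-- Schedulable-happens-before: smallest transitive relation containing HB and
ordering each write of a variable before every later read of that variable. -/
inductive SHB (σ : List Event) : ℕ → ℕ → Prop
  | hb {i j : ℕ} : HB σ i j → SHB σ i j
  | wr {x i j : ℕ} : isWrite σ x i → isRead σ x j → i < j → SHB σ i j
  | trans {i j k : ℕ} : SHB σ i j → SHB σ j k → SHB σ i k

/-! Fix a lock `l`. By lock semantics the `l`-events of `σ` form a sequence of matched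
acquire/release pairs, possibly ending in one pending acquire. Restricting to `S` keeps this
shape: thread-order closure puts an acquire in `S` whenever its release is, and
sync-preserving closure puts the release of an acquire into `S` as soon as a later acquire of
`l` is in `S`, so an acquire of `S` whose release is missing is the last `l`-event of `S`.
Listing `S` in the order of `σ` makes the remaining requirements of a sync-preserving correct
reordering order facts about `σ`, with last writes preserved by lw-closure. -/

lemma lockAlt_of_isPrefix {l : ℕ} {w : List Event} (hw : PairsLang l w) :
    ∀ {es : List Event}, es <+: w → LockAlt l es := by
  induction hw with
  | nil => rintro es hes; rw [List.prefix_nil.1 hes]; exact .nil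
  | pair t _ ih =>
    rintro (_ | ⟨e, _ | ⟨e', es⟩⟩) hes
    · exact .nil
    · obtain ⟨rfl, -⟩ := List.cons_prefix_cons.1 hes
      exact .pending t
    · simp only [List.cons_prefix_cons] at hes
      obtain ⟨rfl, rfl, hes⟩ := hes
      exact .pair t (ih hes)

lemma lockAlt_singleton_iff {l : ℕ} {e : Event} : LockAlt l [e] ↔ e.op = Op.acq l := by
  constructor
  · rintro ⟨⟩; rfl
  · obtain ⟨t, op⟩ := e
    rintro rfl
    exact .pending t

lemma lockAlt_cons_cons_iff {l : ℕ} {e₁ e₂ : Event} {es : List Event} :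
    LockAlt l (e₁ :: e₂ :: es) ↔
      e₁.op = Op.acq l ∧ e₂.op = Op.rel l ∧ e₁.thread = e₂.thread ∧ LockAlt l es := by
  constructor
  · rintro ⟨⟩; exact ⟨rfl, rfl, rfl, ‹_›⟩
  · obtain ⟨t, op₁⟩ := e₁
    obtain ⟨t', op₂⟩ := e₂
    rintro ⟨rfl, rfl, rfl, h⟩
    exact .pair t h

lemma map_evAt_range (σ : List Event) : (List.range σ.length).map (evAt σ) = σ := by
  refine List.ext_getElem (by simp) fun i _ h => ?_
  simp [evAt, List.getElem?_eq_getElem h]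

def lockIdx (σ : List Event) (l : ℕ) : List ℕ :=
  (List.range σ.length).filter (fun i => onLock l (evAt σ i))

lemma mem_lockIdx {σ : List Event} {l i : ℕ} :
    i ∈ lockIdx σ l ↔ i < σ.length ∧ onLock l (evAt σ i) := by
  simp [lockIdx]

lemma pairwise_lt_lockIdx (σ : List Event) (l : ℕ) : (lockIdx σ l).Pairwise (· < ·) :=
  List.pairwise_lt_range.filter _

lemma filter_onLock_eq_map_lockIdx (σ : List Event) (l : ℕ) :
    σ.filter (onLock l) = (lockIdx σ l).map (evAt σ) := by
  conv_lhs => rw [← map_evAt_range σ]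
  rw [List.filter_map]
  rfl

lemma filter_onLock_map_filter_range (σ : List Event) (S : Set ℕ) [DecidablePred (· ∈ S)]
    (l : ℕ) : (((List.range σ.length).filter (· ∈ S)).map (evAt σ)).filter (onLock l) =
      ((lockIdx σ l).filter (· ∈ S)).map (evAt σ) := by
  rw [List.filter_map, lockIdx, List.filter_filter, List.filter_filter]
  exact congrArg _ (List.filter_congr fun _ _ => Bool.and_comm _ _)

lemma LockSem.lockAlt_lockIdx {σ : List Event} (h : LockSem σ) (l : ℕ) :
    LockAlt l ((lockIdx σ l).map (evAt σ)) := by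
  obtain ⟨w, hw, hpre⟩ := h l
  rw [← filter_onLock_eq_map_lockIdx]
  exact lockAlt_of_isPrefix hw hpre

lemma MatchRel.to {σ : List Event} {a r : ℕ} (h : MatchRel σ a r) : TO σ a r :=
  let ⟨_, _, hr, har, ht, _⟩ := h
  ⟨har.le, hr.1, ht⟩

lemma matchRel_of_cons_cons_isSuffix {σ : List Event} {l a r : ℕ} {L : List ℕ}
    (hL : a :: r :: L <:+ lockIdx σ l) (ha : (evAt σ a).op = Op.acq l)
    (hr : (evAt σ r).op = Op.rel l) (ht : threadOf σ a = threadOf σ r) : MatchRel σ a r := by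
  obtain ⟨pre, hpre⟩ := hL
  have hsorted := pairwise_lt_lockIdx σ l
  rw [← hpre, List.pairwise_append] at hsorted
  obtain ⟨-, hsorted, hpre_lt⟩ := hsorted
  have hmem : ∀ k, k ∈ lockIdx σ l → k ∈ pre ∨ k ∈ a :: r :: L := by
    simp [← hpre]
  have hlen : ∀ k ∈ a :: r :: L, k < σ.length := fun k hk =>
    (mem_lockIdx.1 (hpre ▸ List.mem_append_right pre hk)).1
  have har : a < r := List.rel_of_pairwise_cons hsorted (by simp)
  refine ⟨l, ⟨hlen a (by simp), ha⟩, ⟨hlen r (by simp), hr⟩, har, ht, fun k hak hkr hk => ?_⟩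
  have hk : k ∈ lockIdx σ l := by
    rcases hk with hk | hk <;> simp [mem_lockIdx, onLock, hk.1, hk.2]
  rcases hmem k hk with hk | hk
  · exact absurd (hpre_lt k hk a (by simp)) (by omega)
  · rcases List.mem_cons.1 hk with rfl | hk
    · omega
    rcases List.mem_cons.1 hk with rfl | hk
    · omega
    exact absurd ((List.pairwise_cons.1 (List.pairwise_cons.1 hsorted).2).1 k hk) (by omega)

section LockProjection

variable {σ : List Event} {S : Set ℕ} {l : ℕ}

lemma isAcq_of_mem_lockIdx {k : ℕ} (hk : k ∈ lockIdx σ l) (h : (evAt σ k).op = Op.acq l) :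
    isAcq σ l k :=
  ⟨(mem_lockIdx.1 hk).1, h⟩

lemma not_mem_of_lockAlt_of_forall_isAcq (hTO : TODownClosed σ S) {L : List ℕ}
    (hL : L <:+ lockIdx σ l) (halt : LockAlt l (L.map (evAt σ)))
    (hacq : ∀ k ∈ L, isAcq σ l k → k ∉ S) : ∀ k ∈ L, k ∉ S := by
  induction L using List.twoStepInduction with
  | nil => simp
  | singleton a =>
    simp only [List.mem_singleton, forall_eq]
    exact hacq a (by simp) (isAcq_of_mem_lockIdx (hL.subset (by simp))
      (lockAlt_singleton_iff.1 halt))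
  | cons_cons a r L ih _ =>
    obtain ⟨ha, hr, ht, halt⟩ := lockAlt_cons_cons_iff.1 halt
    have haS : a ∉ S := hacq a (by simp) (isAcq_of_mem_lockIdx (hL.subset (by simp)) ha)
    have hrS : r ∉ S := fun hrS =>
      haS (hTO a r (matchRel_of_cons_cons_isSuffix hL ha hr ht).to hrS)
    have hLS := ih (((List.suffix_cons r L).trans (List.suffix_cons a _)).trans hL) halt
      fun k hk => hacq k (by simp [hk])
    simp only [List.mem_cons, forall_eq_or_imp]
    exact ⟨haS, hrS, hLS⟩

lemma lockAlt_filter_mem [DecidablePred (· ∈ S)] (hS : SPClosed σ S) {L : List ℕ}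
    (hL : L <:+ lockIdx σ l) (halt : LockAlt l (L.map (evAt σ))) :
    LockAlt l ((L.filter (· ∈ S)).map (evAt σ)) := by
  induction L using List.twoStepInduction with
  | nil => exact .nil
  | singleton a =>
    by_cases haS : a ∈ S
    · simpa [haS] using halt
    · simpa [haS] using LockAlt.nil
  | cons_cons a r L ih _ =>
    obtain ⟨ha, hr, ht, halt⟩ := lockAlt_cons_cons_iff.1 halt
    have hm := matchRel_of_cons_cons_isSuffix hL ha hr ht
    have hL' : L <:+ lockIdx σ l := ((List.suffix_cons r L).trans (List.suffix_cons a _)).trans hL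
    by_cases hrS : r ∈ S
    · have haS : a ∈ S := hS.1.1 a r hm.to hrS
      simpa [haS, hrS, lockAlt_cons_cons_iff, ha, hr, ht] using ih hL' halt
    by_cases haS : a ∈ S
    · have hsorted := (pairwise_lt_lockIdx σ l).sublist hL.sublist
      have hLS : ∀ k ∈ L, k ∉ S := by
        refine not_mem_of_lockAlt_of_forall_isAcq hS.1.1 hL' halt fun k hk hkacq hkS => hrS ?_
        exact hS.2 l a k r (isAcq_of_mem_lockIdx (hL.subset (by simp)) ha) hkacq
          (List.rel_of_pairwise_cons hsorted (by simp [hk])) haS hkS hm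
      have hnil : L.filter (· ∈ S) = [] := List.filter_eq_nil_iff.2 (by simpa using hLS)
      simpa [haS, hrS, hnil, lockAlt_singleton_iff] using ha
    · simpa [haS, hrS] using ih hL' halt

end LockProjection

lemma List.idxOf_lt_idxOf_iff_of_pairwise_lt {ρ : List ℕ} (hρ : ρ.Pairwise (· < ·)) {i j : ℕ}
    (hi : i ∈ ρ) (hj : j ∈ ρ) : ρ.idxOf i < ρ.idxOf j ↔ i < j := by
  have := hρ.sortedLT.getElem_lt_getElem_iff (hi := List.idxOf_lt_length_of_mem hi)
    (hj := List.idxOf_lt_length_of_mem hj)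
  simpa only [List.getElem_idxOf] using this.symm

lemma rBefore_iff_of_pairwise_lt {ρ : List ℕ} (hρ : ρ.Pairwise (· < ·)) {i j : ℕ} :
    RBefore ρ i j ↔ i ∈ ρ ∧ j ∈ ρ ∧ i < j := by
  unfold RBefore
  exact and_congr_right fun hi => and_congr_right fun hj =>
    List.idxOf_lt_idxOf_iff_of_pairwise_lt hρ hi hj

lemma syncPreserving_of_pairwise_lt (σ : List Event) {ρ : List ℕ} (hρ : ρ.Pairwise (· < ·)) :
    SyncPreserving σ ρ := by
  intro l a₁ a₂ _ _ h₁ h₂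
  simp [rBefore_iff_of_pairwise_lt hρ, h₁, h₂]

lemma exists_lastWrite_ge {σ : List Event} {x i j : ℕ} (hr : isRead σ x j)
    (hw : isWrite σ x i) (hij : i < j) : ∃ w, i ≤ w ∧ LastWrite σ w j := by
  classical
  let P k := k < j ∧ isWrite σ x k
  have hPi : P i := ⟨hij, hw⟩
  have hP : P (Nat.findGreatest P j) := Nat.findGreatest_spec hij.le hPi
  refine ⟨_, Nat.le_findGreatest hij.le hPi, x, hP.2, hr, hP.1, fun k hk hkj hwk => ?_⟩
  exact Nat.findGreatest_is_greatest hk hkj.le ⟨hkj, hwk⟩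

lemma lastWriteIn_iff_lastWrite {σ : List Event} {ρ : List ℕ} (hρ : ρ.Pairwise (· < ·))
    (hlw : ∀ i j, LastWrite σ i j → j ∈ ρ → i ∈ ρ) {i j : ℕ} (hj : j ∈ ρ) :
    LastWriteIn σ ρ i j ↔ LastWrite σ i j := by
  simp only [LastWriteIn, rBefore_iff_of_pairwise_lt hρ]
  constructor
  · rintro ⟨x, hw, hr, ⟨hi, -, hij⟩, hmax⟩
    obtain ⟨w, hiw, hLW⟩ := exists_lastWrite_ge hr hw hij
    rcases hiw.eq_or_lt with rfl | hiw
    · exact hLW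
    have hwρ := hlw w j hLW hj
    obtain ⟨y, hwy, hry, hwj, -⟩ := hLW
    obtain rfl : y = x := Op.read.inj (hry.2.symm.trans hr.2)
    exact absurd ⟨⟨hi, hwρ, hiw⟩, hwρ, hj, hwj⟩ (hmax w hwy)
  · intro hLW
    have ⟨x, hw, hr, hij, hmax⟩ := hLW
    exact ⟨x, hw, hr, ⟨hlw i j hLW hj, hj, hij⟩,
      fun k hk ⟨⟨_, _, hik⟩, _, _, hkj⟩ => hmax k hik hkj hk⟩

lemma correctReordering_of_pairwise_lt {σ : List Event} {ρ : List ℕ} (hρ : ρ.Pairwise (· < ·))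
    (hlen : ∀ i ∈ ρ, i < σ.length) (hwf : WellFormedEvents (ρ.map (evAt σ)))
    (hTO : ∀ i j, TO σ i j → j ∈ ρ → i ∈ ρ) (hLW : ∀ i j, LastWrite σ i j → j ∈ ρ → i ∈ ρ) :
    CorrectReordering σ ρ :=
  ⟨hρ.nodup, hlen, hwf, hTO,
    fun _ _ hi hj hne hij => (rBefore_iff_of_pairwise_lt hρ).2 ⟨hi, hj, hij.1.lt_of_ne hne⟩,
    fun _ _ _ hj _ => lastWriteIn_iff_lastWrite hρ hLW hj⟩

lemma wellFormedEvents_map_filter_range {σ : List Event} (hσ : LockSem σ) {S : Set ℕ}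
    [DecidablePred (· ∈ S)] (hS : SPClosed σ S) :
    WellFormedEvents (((List.range σ.length).filter (· ∈ S)).map (evAt σ)) := fun l => by
  rw [filter_onLock_map_filter_range]
  exact lockAlt_filter_mem hS List.suffix_rfl (hσ.lockAlt_lockIdx l)

theorem stmt8_general (σ : List Event) (hWF : LockSem σ) (S : Set ℕ)
    [DecidablePred (· ∈ S)]
    (hcl : SPClosed σ S) :
    WellFormedEvents (((List.range σ.length).filter (fun i => decide (i ∈ S))).map (evAt σ)) ∧
    CorrectReordering σ ((List.range σ.length).filter (fun i => decide (i ∈ S))) ∧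
    SyncPreserving σ ((List.range σ.length).filter (fun i => decide (i ∈ S))) := by
  set ρ := (List.range σ.length).filter (fun i => decide (i ∈ S))
  have hρ : ρ.Pairwise (· < ·) := List.pairwise_lt_range.filter _
  have hmem : ∀ {i}, i ∈ ρ ↔ i < σ.length ∧ i ∈ S := by simp [ρ]
  have hwf : WellFormedEvents (ρ.map (evAt σ)) := wellFormedEvents_map_filter_range hWF hcl
  refine ⟨hwf, correctReordering_of_pairwise_lt hρ (fun i hi => (hmem.1 hi).1) hwf ?_ ?_,
    syncPreserving_of_pairwise_lt σ hρ⟩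
  · exact fun i j hij hj => hmem.2 ⟨hij.1.trans_lt hij.2.1, hcl.1.1 i j hij (hmem.1 hj).2⟩
  · intro i j hij hj
    have ⟨_, hw, _⟩ := hij
    exact hmem.2 ⟨hw.1, hcl.1.2 i j hij (hmem.1 hj).2⟩

/-- if `S ⊆ Events(σ)` is sync-preserving closed, then listing the
events of `S` in trace order of `σ` yields a well-formed trace that is a
sync-preserving correct reordering of `σ`. -/
theorem stmt8 (σ : List Event) (hWF : LockSem σ) (S : Set ℕ)
    [DecidablePred (· ∈ S)] (hSub : ∀ i ∈ S, i < σ.length)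
    (hcl : SPClosed σ S) :
    WellFormedEvents (((List.range σ.length).filter (fun i => decide (i ∈ S))).map (evAt σ)) ∧
    CorrectReordering σ ((List.range σ.length).filter (fun i => decide (i ∈ S))) ∧
    SyncPreserving σ ((List.range σ.length).filter (fun i => decide (i ∈ S))) :=
  stmt8_general σ hWF S hcl
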